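/- arXiv:2210.16826 — 2 statements merged into one kernel-verified Lean document; each statement's English description precedes it below -/
import Mathlib

section
/- Let p be an odd prime and c an element of F_p. Then the central trinomial coefficient T(p-1,0), computed in F_p, equals the quadratic character χ(c^2 - 4), where χ is the Legendre symbol viewed as a map F_p → F_p (with χ(0) = 0). -/
/-!
Multiplying `x + c + x⁻¹` by `x` turns `T(q-1, 0)` into the coefficient of `x^(q-1)` in
`g = (x² + c x + 1)^(q-1)`, a polynomial of degree `2(q-1)` over `𝔽_q`. Summing `g` over `𝔽_q`
kills every monomial except `x^(q-1)` and `x^(2(q-1))`, each contributing minus its coefficient,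
so `∑ g(x) = -(T(q-1, 0) + 1)`. On the other hand `g(x) = 1` unless `x` is a root of
`x² + c x + 1`, so `∑ g(x) = -#roots = -(χ(c² - 4) + 1)`.
-/

open Polynomial LaurentPolynomial Finset

/-- The trinomial coefficient: coefficient of `x^k` in `(x + c + x⁻¹)^n` over `R`. -/
noncomputable def triCoeff (R : Type*) [CommRing R] (c : R) (n : ℕ) (k : ℤ) : R :=
  (AddMonoidAlgebra.coeff ((LaurentPolynomial.T 1 + LaurentPolynomial.C c + LaurentPolynomial.T (-1)) ^ n :
      LaurentPolynomial R) : ℤ →₀ R) k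

theorem Polynomial.coeff_toLaurent_natCast {R : Type*} [Semiring R] (f : R[X]) (n : ℕ) :
    (toLaurent f).coeff (n : ℤ) = f.coeff n :=
  Finsupp.mapDomain_apply Nat.cast_injective _ n

section Trinomial

variable {R : Type*} [CommRing R]

theorem toLaurent_X_sq_add_C_mul_X_add_one (c : R) :
    toLaurent (X ^ 2 + Polynomial.C c * X + 1 : R[X]) =
      (T 1 + LaurentPolynomial.C c + T (-1)) * T 1 := by
  simp only [map_add, map_one, toLaurent_X_pow, toLaurent_C_mul_eq, toLaurent_X, add_mul, ← T_add]
  norm_num [T_zero]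

theorem triCoeff_zero_eq_coeff (c : R) (n : ℕ) :
    triCoeff R c n 0 = ((X ^ 2 + Polynomial.C c * X + 1 : R[X]) ^ n).coeff n := by
  rw [← coeff_toLaurent_natCast, map_pow, toLaurent_X_sq_add_C_mul_X_add_one, mul_pow, T_pow,
    mul_one, show (T n : R[T;T⁻¹]) = .single (n : ℤ) 1 from rfl,
    AddMonoidAlgebra.coeff_mul_single_apply, add_neg_cancel, mul_one, triCoeff]

end Trinomial

theorem card_quadratic_roots_eq_quadraticChar_add_one {F : Type*} [Field F] [Fintype F]
    [DecidableEq F] (hF : ringChar F ≠ 2) {a : F} (ha : a ≠ 0) (b c : F) :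
    (#{x | a * (x * x) + b * x + c = 0} : ℤ) = quadraticChar F (discrim a b c) + 1 := by
  have : NeZero (2 : F) := ⟨Ring.two_ne_zero hF⟩
  rw [← quadraticChar_card_sqrts hF, Set.toFinset_ofPred]
  congr 1
  refine card_nbij' (fun x => 2 * a * x + b) (fun y => (y - b) / (2 * a)) ?_ ?_ ?_ ?_
  · intro x hx
    simpa [quadratic_eq_zero_iff_discrim_eq_sq ha, eq_comm] using hx
  · intro y hy
    simp only [coe_filter, mem_univ, true_and, Set.mem_ofPred_eq] at hy ⊢
    rw [quadratic_eq_zero_iff_discrim_eq_sq ha, ← hy]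
    field_simp
    ring
  · intro x _
    field_simp
    ring
  · intro y _
    field_simp
    ring

namespace FiniteField

variable {K : Type*} [Field K] [Fintype K]

local notation "q" => Fintype.card K

theorem sum_pow (i : ℕ) : ∑ x : K, x ^ i = if 0 < i ∧ q - 1 ∣ i then -1 else 0 := by
  classical
  rcases Nat.eq_zero_or_pos i with rfl | hi
  · simp
  rw [Fintype.sum_eq_add_sum_subtype_ne _ 0, zero_pow hi.ne', zero_add,
    ← Fintype.sum_equiv unitsEquivNeZero (fun x : Kˣ => (x : K) ^ i) _ (fun _ => rfl),
    sum_pow_units]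
  simp [hi]

theorem sum_eval_of_natDegree_lt (g : K[X]) (hg : g.natDegree < 3 * (q - 1)) :
    ∑ x, g.eval x = -(g.coeff (q - 1) + g.coeff (2 * (q - 1))) := by
  have hq : 0 < q - 1 := tsub_pos_of_lt Fintype.one_lt_card
  have hmultiples : ∀ i < 3 * (q - 1), 0 < i ∧ q - 1 ∣ i → i = q - 1 ∨ i = 2 * (q - 1) := by
    rintro _ hi ⟨hpos, k, rfl⟩
    have : k < 3 := by nlinarith
    interval_cases k <;> omega
  calc ∑ x, g.eval x = ∑ i ∈ range (3 * (q - 1)), g.coeff i * ∑ x : K, x ^ i := by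
        simp only [eval_eq_sum_range' hg, mul_sum]
        exact sum_comm
    _ = -(g.coeff (q - 1) + g.coeff (2 * (q - 1))) := by
        simp only [FiniteField.sum_pow, mul_ite, mul_neg_one, mul_zero]
        rw [sum_eq_add (q - 1) (2 * (q - 1)) (by omega)]
        · simp [hq, add_comm]
        · intro i hi hne
          rw [if_neg]
          exact fun h => (hmultiples i (mem_range.1 hi) h).elim hne.1 hne.2
        all_goals exact fun h => absurd (mem_range.2 (by omega)) h

theorem sum_pow_card_sub_one_eq_neg_card_zeros [DecidableEq K] (f : K → K) :
    ∑ x, f x ^ (q - 1) = -(#{x | f x = 0} : K) := by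
  have hq : q - 1 ≠ 0 := (tsub_pos_of_lt Fintype.one_lt_card).ne'
  have h : ∀ x, f x ^ (q - 1) = 1 - if f x = 0 then 1 else 0 := fun x => by
    by_cases hx : f x = 0
    · simp [hx, hq]
    · simp [hx, pow_card_sub_one_eq_one _ hx]
  simp [h, sum_sub_distrib, sum_boole]

theorem coeff_X_sq_add_C_mul_X_add_one_pow_eq_quadraticChar [DecidableEq K]
    (hK : ringChar K ≠ 2) (c : K) :
    ((X ^ 2 + Polynomial.C c * X + 1 : K[X]) ^ (q - 1)).coeff (q - 1) =
      quadraticChar K (c ^ 2 - 4) := by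
  have hq : 0 < q - 1 := tsub_pos_of_lt Fintype.one_lt_card
  have hf : (X ^ 2 + Polynomial.C c * X + 1 : K[X]).Monic := by monicity!
  have hf2 : (X ^ 2 + Polynomial.C c * X + 1 : K[X]).natDegree = 2 := by compute_degree!
  set f : K[X] := X ^ 2 + Polynomial.C c * X + 1
  have hdeg : (f ^ (q - 1)).natDegree = 2 * (q - 1) := by
    rw [hf.natDegree_pow, hf2, mul_comm]
  have hlead : (f ^ (q - 1)).coeff (2 * (q - 1)) = 1 := hdeg ▸ (hf.pow _).coeff_natDegree
  have hsum := sum_eval_of_natDegree_lt (f ^ (q - 1)) (by omega)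
  have hzeros := sum_pow_card_sub_one_eq_neg_card_zeros fun x => 1 * (x * x) + c * x + 1
  have hroots := card_quadratic_roots_eq_quadraticChar_add_one hK one_ne_zero c 1
  have heval : ∀ x, (f ^ (q - 1)).eval x = (1 * (x * x) + c * x + 1) ^ (q - 1) := fun x => by
    simp only [f, eval_pow, eval_add, eval_mul, eval_C, eval_X, eval_one]
    ring
  simp only [heval, hzeros, hlead] at hsum
  rw [discrim, mul_one, mul_one] at hroots
  have hroots' := congrArg (Int.cast : ℤ → K) hroots
  push_cast at hroots'
  linear_combination hsum + hroots'

end FiniteField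

theorem central_tri_p_sub_one (p : ℕ) [Fact p.Prime] (hp : p ≠ 2) (c : ZMod p) :
    triCoeff (ZMod p) c (p - 1) 0 =
      ((quadraticChar (ZMod p) (c ^ 2 - 4) : ℤ) : ZMod p) := by
  have hF : ringChar (ZMod p) ≠ 2 := by rwa [ZMod.ringChar_zmod_n]
  simpa [triCoeff_zero_eq_coeff, ZMod.card] using
    FiniteField.coeff_X_sq_add_C_mul_X_add_one_pow_eq_quadraticChar hF c
end

section
/- Let p be an odd prime, c ∈ F_p, and k an integer. Then, over F_p, k * T(p-1,k) = T(p-2,k+1) - T(p-2,k-1), where T(n,j) denotes the coefficient of x^j in (x + c + 1/x)^n. -/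
namespace LaurentPolynomial

variable {R : Type*} [Semiring R]

theorem coeff_mul_T (f : R[T;T⁻¹]) (m k : ℤ) : (f * T m).coeff k = f.coeff (k - m) := by
  rw [T, AddMonoidAlgebra.coeff_mul_single_apply, mul_one, sub_eq_add_neg]

theorem coeff_mul_C (f : R[T;T⁻¹]) (a : R) (k : ℤ) : (f * C a).coeff k = f.coeff k * a :=
  AddMonoidAlgebra.coeff_mul_single_zero f a k

end LaurentPolynomial

section TriCoeff

open LaurentPolynomial

variable {R : Type*} [CommRing R] (c : R)

theorem intCast_mul_triCoeff_zero (k : ℤ) : (k : R) * triCoeff R c 0 k = 0 := by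
  rw [triCoeff, pow_zero, ← T_zero, T_apply]
  split_ifs with h
  · rw [← h, Int.cast_zero, zero_mul]
  · exact mul_zero _

theorem triCoeff_succ (n : ℕ) (k : ℤ) :
    triCoeff R c (n + 1) k =
      triCoeff R c n (k - 1) + c * triCoeff R c n k + triCoeff R c n (k + 1) := by
  simp only [triCoeff, pow_succ, mul_add, AddMonoidAlgebra.coeff_add, Finsupp.add_apply,
    coeff_mul_T, coeff_mul_C, sub_neg_eq_add, mul_comm _ c]

theorem intCast_mul_triCoeff_succ (n : ℕ) (k : ℤ) :
    (k : R) * triCoeff R c (n + 1) k =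
      (n + 1) * (triCoeff R c n (k - 1) - triCoeff R c n (k + 1)) := by
  -- the Leibniz rule `θ (g f) = θ g · f + g · θ f` for `g = f^n`, read at `x^k`
  have leibniz : ∀ (m : ℕ) (j : ℤ), (j : R) * triCoeff R c (m + 1) j =
      ((j - 1 : ℤ) : R) * triCoeff R c m (j - 1) + c * ((j : R) * triCoeff R c m j) +
        ((j + 1 : ℤ) : R) * triCoeff R c m (j + 1) +
        (triCoeff R c m (j - 1) - triCoeff R c m (j + 1)) := by
    intro m j
    rw [triCoeff_succ]
    push_cast
    ring
  induction n generalizing k with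
  | zero =>
    rw [leibniz, intCast_mul_triCoeff_zero, intCast_mul_triCoeff_zero, intCast_mul_triCoeff_zero]
    ring
  | succ n ih =>
    rw [leibniz, ih, ih, ih, triCoeff_succ _ _ (k - 1), triCoeff_succ _ _ (k + 1)]
    simp only [sub_add_cancel, add_sub_cancel_right, Nat.cast_add, Nat.cast_one]
    ring

end TriCoeff

theorem tri_deriv_identity_general (p : ℕ) [Fact p.Prime] (c : ZMod p) (k : ℤ) :
    (k : ZMod p) * triCoeff (ZMod p) c (p - 1) k =
      triCoeff (ZMod p) c (p - 2) (k + 1) - triCoeff (ZMod p) c (p - 2) (k - 1) := by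
  have two_le : 2 ≤ p := (Fact.out : p.Prime).two_le
  have hpred : p - 1 = p - 2 + 1 := by omega
  have hcast : ((p - 2 : ℕ) : ZMod p) + 1 = -1 := by
    rw [Nat.cast_sub two_le, ZMod.natCast_self]
    ring
  rw [hpred, intCast_mul_triCoeff_succ, hcast]
  ring

theorem tri_deriv_identity (p : ℕ) [Fact p.Prime] (hp : p ≠ 2) (c : ZMod p) (k : ℤ) :
    (k : ZMod p) * triCoeff (ZMod p) c (p - 1) k =
      triCoeff (ZMod p) c (p - 2) (k + 1) - triCoeff (ZMod p) c (p - 2) (k - 1) :=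
  tri_deriv_identity_general p c k
end
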